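/- arXiv:1511.00121 — 2 statements merged into one kernel-verified Lean document; each statement's English description precedes it below -/
import Mathlib

section
/- Let F: ℝ × ℝ^d → ℝ^d be continuous and Lipschitz in the second variable with flow Φ_t, let Λ ⊆ ℝ^d, and let t_n → 0. Then the deformation Λ_n := Φ_{t_n}(Λ) with maps τ_n := Φ_{t_n}|_Λ satisfies condition (L1): for every R > 0, sup over λ, λ' ∈ Λ with |λ − λ'| ≤ R of |(τ_n(λ) − τ_n(λ')) − (λ − λ')| tends to 0 as n → ∞. -/
/-!
Along the flow, the relative displacement `f s = (Φ_s x - Φ_s y) - (x - y)` vanishes at `s = 0`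
and, `F s` being `L`-Lipschitz, satisfies `‖f' s‖ ≤ L ‖f s‖ + L ‖x - y‖`. Grönwall's inequality
gives `‖f s‖ ≤ ‖x - y‖ (exp (L |s|) - 1)` (negative times by reversing the flow), a bound that
is uniform over pairs at distance at most `R` and tends to `0` with `s`.
-/

open Filter

section FlowDisplacement

variable {E : Type*} [NormedAddCommGroup E] [NormedSpace ℝ E] {F : ℝ → E → E} {L : NNReal}
  {Φ : ℝ → E → E}

theorem norm_flow_sub_sub_le_of_nonneg (hFlip : ∀ t, LipschitzWith L (F t))
    (hΦ0 : ∀ x, Φ 0 x = x) (hΦ : ∀ x t, HasDerivAt (fun s => Φ s x) (F t (Φ t x)) t)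
    (x y : E) {s : ℝ} (hs : 0 ≤ s) :
    ‖Φ s x - Φ s y - (x - y)‖ ≤ ‖x - y‖ * (Real.exp (L * s) - 1) := by
  set f : ℝ → E := fun u => Φ u x - Φ u y - (x - y)
  have hf : ∀ u, HasDerivAt f (F u (Φ u x) - F u (Φ u y)) u := fun u =>
    ((hΦ x u).sub (hΦ y u)).sub_const (x - y)
  have hf0 : ‖f 0‖ ≤ 0 := by simp [f, hΦ0]
  have hf' : ∀ u ∈ Set.Ico 0 s,
      ‖F u (Φ u x) - F u (Φ u y)‖ ≤ L * ‖f u‖ + L * ‖x - y‖ := fun u _ =>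
    calc ‖F u (Φ u x) - F u (Φ u y)‖ ≤ L * ‖Φ u x - Φ u y‖ := (hFlip u).norm_sub_le _ _
      _ = L * ‖f u + (x - y)‖ := by simp only [f, sub_add_cancel]
      _ ≤ L * ‖f u‖ + L * ‖x - y‖ := by
        rw [← mul_add]; exact mul_le_mul_of_nonneg_left (norm_add_le _ _) L.coe_nonneg
  have := norm_le_gronwallBound_of_norm_deriv_right_le
    (fun u _ => (hf u).continuousAt.continuousWithinAt) (fun u _ => (hf u).hasDerivWithinAt)
    hf0 hf' s (Set.right_mem_Icc.2 hs)
  refine this.trans_eq ?_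
  rcases eq_or_ne (L : ℝ) 0 with hL | hL
  · simp [gronwallBound, hL]
  · simp only [gronwallBound_of_K_ne_0 hL, sub_zero, zero_mul, zero_add]
    field_simp

theorem hasDerivAt_flow_neg (hΦ : ∀ x t, HasDerivAt (fun s => Φ s x) (F t (Φ t x)) t)
    (x : E) (t : ℝ) :
    HasDerivAt (fun s => Φ (-s) x) (-F (-t) (Φ (-t) x)) t := by
  simpa [Function.comp_def] using (hΦ x (-t)).scomp t (hasDerivAt_neg t)

theorem norm_flow_sub_sub_le (hFlip : ∀ t, LipschitzWith L (F t))
    (hΦ0 : ∀ x, Φ 0 x = x) (hΦ : ∀ x t, HasDerivAt (fun s => Φ s x) (F t (Φ t x)) t)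
    (x y : E) (s : ℝ) :
    ‖Φ s x - Φ s y - (x - y)‖ ≤ ‖x - y‖ * (Real.exp (L * |s|) - 1) := by
  rcases le_or_gt 0 s with hs | hs
  · rw [abs_of_nonneg hs]
    exact norm_flow_sub_sub_le_of_nonneg hFlip hΦ0 hΦ x y hs
  · -- `s ↦ Φ (-s)` is the flow of the `L`-Lipschitz field `(u, z) ↦ -F (-u) z`
    have := norm_flow_sub_sub_le_of_nonneg (F := fun u z => -F (-u) z) (Φ := fun u => Φ (-u))
      (fun u => (hFlip (-u)).neg) (by simpa using hΦ0) (hasDerivAt_flow_neg hΦ) x y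
      (neg_nonneg.2 hs.le)
    simpa [abs_of_neg hs] using this

end FlowDisplacement

theorem tendsto_exp_mul_abs_sub_one {ι : Type*} {l : Filter ι} {t : ι → ℝ}
    (ht : Tendsto t l (nhds 0)) (c : ℝ) :
    Tendsto (fun n => Real.exp (c * |t n|) - 1) l (nhds 0) := by
  have hcont : Continuous fun s : ℝ => Real.exp (c * |s|) - 1 := by fun_prop
  simpa [Function.comp_def] using (hcont.tendsto 0).comp ht

theorem flow_deformation_L1_general {d : ℕ}
    (F : ℝ → EuclideanSpace ℝ (Fin d) → EuclideanSpace ℝ (Fin d))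
    (L : NNReal) (hFlip : ∀ t : ℝ, LipschitzWith L (F t))
    (Φ : ℝ → EuclideanSpace ℝ (Fin d) → EuclideanSpace ℝ (Fin d))
    (hΦ0 : ∀ x, Φ 0 x = x)
    (hΦ : ∀ x t, HasDerivAt (fun s => Φ s x) (F t (Φ t x)) t)
    (Λ : Set (EuclideanSpace ℝ (Fin d)))
    (t : ℕ → ℝ) (ht : Tendsto t atTop (nhds 0)) :
    ∀ R > (0 : ℝ), ∀ ε > (0 : ℝ), ∃ N : ℕ, ∀ n ≥ N,
      ∀ lam ∈ Λ, ∀ lam' ∈ Λ, ‖lam - lam'‖ ≤ R →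
        ‖(Φ (t n) lam - Φ (t n) lam') - (lam - lam')‖ ≤ ε := by
  intro R _ ε hε
  have hsmall := ((tendsto_exp_mul_abs_sub_one ht L).const_mul R).eventually
    (ge_mem_nhds (by simpa using hε))
  obtain ⟨N, hN⟩ := eventually_atTop.1 hsmall
  refine ⟨N, fun n hn lam _ lam' _ hR => ?_⟩
  have hexp : 0 ≤ Real.exp (L * |t n|) - 1 :=
    sub_nonneg.2 (Real.one_le_exp (by positivity))
  calc ‖(Φ (t n) lam - Φ (t n) lam') - (lam - lam')‖
      ≤ ‖lam - lam'‖ * (Real.exp (L * |t n|) - 1) := norm_flow_sub_sub_le hFlip hΦ0 hΦ _ _ _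
    _ ≤ R * (Real.exp (L * |t n|) - 1) := mul_le_mul_of_nonneg_right hR hexp
    _ ≤ ε := hN n hn

/-- Condition (L1) for the deformation `Λ_n = Φ_{t_n}(Λ)` induced by the flow of a Lipschitz
vector field, with `t_n → 0`: relative displacements of pairs of points of `Λ` at distance at
most `R` converge uniformly to the original relative positions. -/
theorem flow_deformation_L1 {d : ℕ}
    (F : ℝ → EuclideanSpace ℝ (Fin d) → EuclideanSpace ℝ (Fin d))
    (hFcont : Continuous (fun p : ℝ × EuclideanSpace ℝ (Fin d) => F p.1 p.2))
    (L : NNReal) (hFlip : ∀ t : ℝ, LipschitzWith L (F t))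
    (Φ : ℝ → EuclideanSpace ℝ (Fin d) → EuclideanSpace ℝ (Fin d))
    (hΦ0 : ∀ x, Φ 0 x = x)
    (hΦ : ∀ x t, HasDerivAt (fun s => Φ s x) (F t (Φ t x)) t)
    (Λ : Set (EuclideanSpace ℝ (Fin d)))
    (t : ℕ → ℝ) (ht : Tendsto t atTop (nhds 0)) :
    ∀ R > (0 : ℝ), ∀ ε > (0 : ℝ), ∃ N : ℕ, ∀ n ≥ N,
      ∀ lam ∈ Λ, ∀ lam' ∈ Λ, ‖lam - lam'‖ ≤ R →
        ‖(Φ (t n) lam - Φ (t n) lam') - (lam - lam')‖ ≤ ε :=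
  flow_deformation_L1_general F L hFlip Φ hΦ0 hΦ Λ t ht
end

section
/- Let F: ℝ × ℝ^d → ℝ^d be continuous and Lipschitz in the second variable with flow Φ_t, let Λ ⊆ ℝ^d, and let t_n → 0. Then the deformation Λ_n := Φ_{t_n}(Λ) with maps τ_n := Φ_{t_n}|_Λ satisfies condition (L2): for every R > 0 there exist R' > 0 and n_0 ∈ ℕ such that whenever |τ_n(λ) − τ_n(λ')| ≤ R for some n ≥ n_0 and λ, λ' ∈ Λ, then |λ − λ'| ≤ R'. -/
/-! Gronwall's inequality, applied to the time-reversed trajectories `s ↦ Φ (τ (1 - s)) x` on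
`[0, 1]`, shows that the flow of a field that is `L`-Lipschitz in space contracts distances by at
most the factor `exp (-|τ| L)`. Once `|t n| ≤ 1`, one can therefore take `R' = exp L * R`. -/

open Filter

section FlowLowerBound

variable {E : Type*} [NormedAddCommGroup E] [NormedSpace ℝ E]
  {F : ℝ → E → E} {Φ : ℝ → E → E}

theorem hasDerivAt_flow_reversed
    (hΦ : ∀ x t, HasDerivAt (fun s => Φ s x) (F t (Φ t x)) t) (τ : ℝ) (x : E) (s : ℝ) :
    HasDerivAt (fun u => Φ (τ * (1 - u)) x) ((-τ) • F (τ * (1 - s)) (Φ (τ * (1 - s)) x)) s := by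
  have hlin : HasDerivAt (fun u : ℝ => τ * (1 - u)) (-τ) s := by
    simpa using ((hasDerivAt_const s (1 : ℝ)).sub (hasDerivAt_id s)).const_mul τ
  exact (hΦ x (τ * (1 - s))).scomp s hlin

theorem dist_le_exp_mul_dist_flow {L : NNReal} (hF : ∀ t, LipschitzWith L (F t))
    (hΦ0 : ∀ x, Φ 0 x = x) (hΦ : ∀ x t, HasDerivAt (fun s => Φ s x) (F t (Φ t x)) t)
    (τ : ℝ) (x y : E) :
    dist x y ≤ Real.exp (|τ| * L) * dist (Φ τ x) (Φ τ y) := by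
  have hv : ∀ s, LipschitzWith (‖-τ‖₊ * L) (fun z => (-τ) • F (τ * (1 - s)) z) :=
    fun s => (lipschitzWith_smul (-τ)).comp (hF _)
  have hrev := hasDerivAt_flow_reversed hΦ τ
  have := dist_le_of_trajectories_ODE hv
    (fun s _ => (hrev x s).continuousAt.continuousWithinAt)
    (fun s _ => (hrev x s).hasDerivWithinAt)
    (fun s _ => (hrev y s).continuousAt.continuousWithinAt)
    (fun s _ => (hrev y s).hasDerivWithinAt)
    (a := 0) (b := 1) le_rfl 1 ⟨zero_le_one, le_rfl⟩
  simpa [hΦ0, mul_comm] using this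

end FlowLowerBound

theorem flow_deformation_L2_general {d : ℕ}
    (F : ℝ → EuclideanSpace ℝ (Fin d) → EuclideanSpace ℝ (Fin d))
    (L : NNReal) (hFlip : ∀ t : ℝ, LipschitzWith L (F t))
    (Φ : ℝ → EuclideanSpace ℝ (Fin d) → EuclideanSpace ℝ (Fin d))
    (hΦ0 : ∀ x, Φ 0 x = x)
    (hΦ : ∀ x t, HasDerivAt (fun s => Φ s x) (F t (Φ t x)) t)
    (Λ : Set (EuclideanSpace ℝ (Fin d)))
    (t : ℕ → ℝ) (ht : Tendsto t atTop (nhds 0)) :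
    ∀ R > (0 : ℝ), ∃ R' > (0 : ℝ), ∃ n₀ : ℕ, ∀ n ≥ n₀,
      ∀ lam ∈ Λ, ∀ lam' ∈ Λ, ‖Φ (t n) lam - Φ (t n) lam'‖ ≤ R → ‖lam - lam'‖ ≤ R' := by
  intro R hR
  obtain ⟨n₀, hn₀⟩ := eventually_atTop.mp <| (Metric.tendsto_nhds.mp ht 1 one_pos).mono
    fun n hn => (Real.dist_0_eq_abs (t n) ▸ hn).le
  refine ⟨Real.exp L * R, by positivity, n₀, fun n hn lam _ lam' _ hdist => ?_⟩
  have hexp : Real.exp (|t n| * L) ≤ Real.exp L :=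
    Real.exp_le_exp.mpr (mul_le_of_le_one_left L.2 (hn₀ n hn))
  rw [← dist_eq_norm] at hdist ⊢
  calc dist lam lam' ≤ Real.exp (|t n| * L) * dist (Φ (t n) lam) (Φ (t n) lam') :=
        dist_le_exp_mul_dist_flow hFlip hΦ0 hΦ (t n) lam lam'
    _ ≤ Real.exp L * R := by gcongr

/-- Condition (L2) for the deformation `Λ_n = Φ_{t_n}(Λ)` induced by the flow of a Lipschitz
vector field, with `t_n → 0`: for every `R > 0` there are `R' > 0` and `n₀` such that
`‖Φ_{t_n}(λ) - Φ_{t_n}(λ')‖ ≤ R` for some `n ≥ n₀` implies `‖λ - λ'‖ ≤ R'`. -/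
theorem flow_deformation_L2 {d : ℕ}
    (F : ℝ → EuclideanSpace ℝ (Fin d) → EuclideanSpace ℝ (Fin d))
    (hFcont : Continuous (fun p : ℝ × EuclideanSpace ℝ (Fin d) => F p.1 p.2))
    (L : NNReal) (hFlip : ∀ t : ℝ, LipschitzWith L (F t))
    (Φ : ℝ → EuclideanSpace ℝ (Fin d) → EuclideanSpace ℝ (Fin d))
    (hΦ0 : ∀ x, Φ 0 x = x)
    (hΦ : ∀ x t, HasDerivAt (fun s => Φ s x) (F t (Φ t x)) t)
    (Λ : Set (EuclideanSpace ℝ (Fin d)))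
    (t : ℕ → ℝ) (ht : Tendsto t atTop (nhds 0)) :
    ∀ R > (0 : ℝ), ∃ R' > (0 : ℝ), ∃ n₀ : ℕ, ∀ n ≥ n₀,
      ∀ lam ∈ Λ, ∀ lam' ∈ Λ, ‖Φ (t n) lam - Φ (t n) lam'‖ ≤ R → ‖lam - lam'‖ ≤ R' :=
  flow_deformation_L2_general F L hFlip Φ hΦ0 hΦ Λ t ht
end
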